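/- Let R be a Noetherian local ring. For an R-module M the following are equivalent: (i) M is simple torsion-free and divisible; (ii) M is torsion-free and simple divisible; (iii) M ≅ κ(p) for some maximal element p of Ass(R). -/

import Mathlib

/-- A module is torsion-free if no nonzero element is annihilated by a
non-zerodivisor of `R`. -/
def IsTorsionFreeMod (R M : Type) [CommRing R] [AddCommGroup M] [Module R M] : Prop :=
  ∀ (r : R) (x : M), r ∈ nonZeroDivisors R → r • x = 0 → x = 0

/-- A module is torsion if every element is annihilated by some non-zerodivisor. -/
def IsTorsionMod (R M : Type) [CommRing R] [AddCommGroup M] [Module R M] : Prop :=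
  ∀ x : M, ∃ r ∈ nonZeroDivisors R, r • x = 0

/-- `M` is simple torsion-free if `M ≠ 0` is torsion-free and no proper quotient
`M/U` with `U ≠ 0` is torsion-free. -/
def SimpleTorsionFree (R M : Type) [CommRing R] [AddCommGroup M] [Module R M] : Prop :=
  (∃ x : M, x ≠ 0) ∧ IsTorsionFreeMod R M ∧
    ∀ U : Submodule R M, U ≠ ⊥ → U ≠ ⊤ → ¬ IsTorsionFreeMod R (M ⧸ U)

/-- A module is divisible if `rN = N` for every non-zerodivisor `r` of `R`. -/
def IsDivisibleMod (R N : Type) [CommRing R] [AddCommGroup N] [Module R N] : Prop :=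
  ∀ r ∈ nonZeroDivisors R, ∀ x : N, ∃ y : N, r • y = x

/-- A submodule `V` is divisible if `rV = V` for every non-zerodivisor `r`. -/
def IsDivisibleSub (R : Type) {N : Type} [CommRing R] [AddCommGroup N] [Module R N]
    (V : Submodule R N) : Prop :=
  ∀ r ∈ nonZeroDivisors R, ∀ x ∈ V, ∃ y ∈ V, r • y = x

/-- `N` is simple divisible if `N ≠ 0` is divisible and no submodule `0 ≠ V ⊊ N`
is divisible. -/
def SimpleDivisible (R N : Type) [CommRing R] [AddCommGroup N] [Module R N] : Prop :=
  (∃ x : N, x ≠ 0) ∧ IsDivisibleMod R N ∧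
    ∀ V : Submodule R N, V ≠ ⊥ → V ≠ ⊤ → ¬ IsDivisibleSub R V

/-! For a torsion-free divisible module `M`, a quotient `M ⧸ U` is torsion-free exactly when `U`
is divisible, which gives (i) ⇔ (ii). If `M` is moreover simple divisible, every `x : M` is moved
into any nonzero submodule by some non-zerodivisor, because the saturation of that submodule is
divisible. Fix `y ≠ 0` and `p = ann y`. Applied to `R ∙ y`, this makes `M` the localization of
`R ⧸ p` at the non-zerodivisors; applied to `q • y` for `q ⊋ p`, it shows that `p` is maximal
among the ideals consisting of zero divisors, which in a Noetherian ring are exactly the maximal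
associated primes. For such `p` every `t ∉ p` divides a non-zerodivisor modulo `p`, so `κ(p)` is
the same localization of `R ⧸ p`. -/

open scoped nonZeroDivisors
open LinearMap (toSpanSingleton)

section TorsionFreeDivisible

variable {R M N : Type} [CommRing R] [AddCommGroup M] [Module R M] [AddCommGroup N] [Module R N]

lemma isTorsionFreeMod_quotient_iff (hTF : IsTorsionFreeMod R M) (hDiv : IsDivisibleMod R M)
    (U : Submodule R M) : IsTorsionFreeMod R (M ⧸ U) ↔ IsDivisibleSub R U := by
  constructor
  · intro hU r hr x hx
    obtain ⟨y, rfl⟩ := hDiv r hr x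
    refine ⟨y, (Submodule.Quotient.mk_eq_zero U).mp (hU r _ hr ?_), rfl⟩
    rwa [← Submodule.Quotient.mk_smul, Submodule.Quotient.mk_eq_zero]
  · intro hU r x hr hx
    obtain ⟨x, rfl⟩ := Submodule.Quotient.mk_surjective U x
    rw [← Submodule.Quotient.mk_smul, Submodule.Quotient.mk_eq_zero] at hx
    obtain ⟨y, hy, hyx⟩ := hU r hr _ hx
    obtain rfl : y = x := sub_eq_zero.mp (hTF r _ hr (by rw [smul_sub, hyx, sub_self]))
    rwa [Submodule.Quotient.mk_eq_zero]

lemma simpleTorsionFree_iff_simpleDivisible (hTF : IsTorsionFreeMod R M)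
    (hDiv : IsDivisibleMod R M) : SimpleTorsionFree R M ↔ SimpleDivisible R M := by
  simp [SimpleTorsionFree, SimpleDivisible, isTorsionFreeMod_quotient_iff hTF hDiv, hTF, hDiv]

lemma simpleTorsionFree_and_isDivisibleMod_iff :
    SimpleTorsionFree R M ∧ IsDivisibleMod R M ↔ IsTorsionFreeMod R M ∧ SimpleDivisible R M := by
  constructor
  · rintro ⟨h, hDiv⟩
    exact ⟨h.2.1, (simpleTorsionFree_iff_simpleDivisible h.2.1 hDiv).mp h⟩
  · rintro ⟨hTF, h⟩
    exact ⟨(simpleTorsionFree_iff_simpleDivisible hTF h.2.1).mpr h, h.2.1⟩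

lemma IsTorsionFreeMod.of_injective {f : M →ₗ[R] N} (hf : Function.Injective f)
    (h : IsTorsionFreeMod R N) : IsTorsionFreeMod R M :=
  fun r x hr hx => hf <| by rw [map_zero]; exact h r (f x) hr (by rw [← map_smul, hx, map_zero])

lemma IsDivisibleSub.map (f : M →ₗ[R] N) {V : Submodule R M} (hV : IsDivisibleSub R V) :
    IsDivisibleSub R (V.map f) := by
  rintro r hr _ ⟨x, hx, rfl⟩
  obtain ⟨y, hy, rfl⟩ := hV r hr x hx
  exact ⟨f y, V.mem_map_of_mem hy, (map_smul f r y).symm⟩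

lemma SimpleDivisible.of_linearEquiv (e : M ≃ₗ[R] N) (h : SimpleDivisible R N) :
    SimpleDivisible R M := by
  obtain ⟨⟨y, hy⟩, hDiv, hSimp⟩ := h
  refine ⟨⟨e.symm y, by simpa using hy⟩, fun r hr x => ?_, fun V hV hVtop hVdiv => ?_⟩
  · obtain ⟨z, hz⟩ := hDiv r hr (e x)
    exact ⟨e.symm z, by rw [← map_smul, hz, e.symm_apply_apply]⟩
  · refine hSimp (V.map (e : M →ₗ[R] N)) ?_ ?_ (hVdiv.map _)
    · simpa using hV
    · simpa using hVtop

lemma exists_smul_mem_of_simpleDivisible (hSD : SimpleDivisible R M) {U : Submodule R M}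
    (hU : U ≠ ⊥) (x : M) : ∃ s ∈ R⁰, s • x ∈ U := by
  obtain ⟨-, hDiv, hSimp⟩ := hSD
  let W := (Submodule.torsion' R (M ⧸ U) R⁰).comap U.mkQ
  have hmem : ∀ x, x ∈ W ↔ ∃ s ∈ R⁰, s • x ∈ U := fun x => by
    simp [W, Submodule.mem_torsion'_iff, ← Submodule.Quotient.mk_smul]
  have hW : W = ⊤ := by
    by_contra hW
    refine hSimp W (ne_bot_of_le_ne_bot hU fun x hx => (hmem x).mpr ⟨1, one_mem _, by simpa⟩) hW ?_
    intro r hr x hx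
    obtain ⟨s, hs, hsx⟩ := (hmem x).mp hx
    obtain ⟨y, rfl⟩ := hDiv r hr x
    exact ⟨y, (hmem y).mpr ⟨s * r, mul_mem hs hr, by rwa [mul_smul]⟩, rfl⟩
  exact (hmem x).mp (hW ▸ Submodule.mem_top)

lemma simpleDivisible_of_exists_smul_eq_smul (hTF : IsTorsionFreeMod R M)
    (hDiv : IsDivisibleMod R M) (hne : ∃ x : M, x ≠ 0)
    (h : ∀ x v : M, v ≠ 0 → ∃ s ∈ R⁰, ∃ a : R, s • x = a • v) : SimpleDivisible R M := by
  refine ⟨hne, hDiv, fun V hV hVtop hVdiv => hVtop (eq_top_iff.mpr fun x _ => ?_)⟩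
  obtain ⟨v, hvV, hv⟩ := (Submodule.ne_bot_iff V).mp hV
  obtain ⟨s, hs, a, hsx⟩ := h x v hv
  obtain ⟨y, hyV, hy⟩ := hVdiv s hs _ (V.smul_mem a hvV)
  obtain rfl : y = x := sub_eq_zero.mp (hTF s _ hs (by rw [smul_sub, hy, hsx, sub_self]))
  exact hyV

lemma isLocalizedModule_liftQ_toSpanSingleton (hTF : IsTorsionFreeMod R M)
    (hDiv : IsDivisibleMod R M) {p : Ideal R} {y : M}
    (hy : LinearMap.ker (toSpanSingleton R M y) = p)
    (hfrac : ∀ x : M, ∃ s ∈ R⁰, ∃ a : R, s • x = a • y) :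
    IsLocalizedModule R⁰ (p.liftQ (toSpanSingleton R M y) hy.ge) where
  map_units s := by
    refine (Module.End.isUnit_iff _).mpr ⟨fun x x' h => ?_, fun x => ?_⟩
    · simp only [Module.algebraMap_end_apply] at h
      exact sub_eq_zero.mp (hTF s _ s.2 (by rw [smul_sub, h, sub_self]))
    · exact hDiv s s.2 x
  surj x := by
    obtain ⟨s, hs, a, h⟩ := hfrac x
    exact ⟨(p.mkQ a, ⟨s, hs⟩), h⟩
  exists_of_eq h := ⟨1, by
    rw [one_smul, one_smul]
    exact LinearMap.ker_eq_bot.mp (Submodule.ker_liftQ_eq_bot' p _ hy.symm) h⟩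

end TorsionFreeDivisible

lemma exists_mem_nonZeroDivisors_sub_mul_mem {R : Type} [CommRing R] {p : Ideal R}
    (hp : Maximal (fun I : Ideal R => Disjoint (I : Set R) R⁰) p) {t : R} (ht : t ∉ p) :
    ∃ s ∈ R⁰, ∃ c : R, s - c * t ∈ p := by
  have hlt : p < p ⊔ Ideal.span {t} :=
    lt_of_le_of_ne le_sup_left fun h =>
      ht (h ▸ Ideal.mem_sup_right (Ideal.mem_span_singleton_self t))
  obtain ⟨s, hs, hsS⟩ := Set.not_disjoint_iff.mp (hp.not_prop_of_gt hlt)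
  obtain ⟨q, hq, _, hct, rfl⟩ := Submodule.mem_sup.mp hs
  obtain ⟨c, rfl⟩ := Ideal.mem_span_singleton'.mp hct
  exact ⟨q + c * t, hsS, c, by simpa using hq⟩

section ResidueField

variable {R : Type} [CommRing R] {p : Ideal R} [p.IsPrime]

lemma ker_toSpanSingleton_residueField_one :
    LinearMap.ker (toSpanSingleton R p.ResidueField 1) = p := by
  ext a
  simp [← Algebra.algebraMap_eq_smul_one]

lemma algebraMap_residueField_ne_zero (hp : Disjoint (p : Set R) R⁰) {s : R} (hs : s ∈ R⁰) :
    algebraMap R p.ResidueField s ≠ 0 := fun h =>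
  Set.disjoint_left.mp hp (Ideal.algebraMap_residueField_eq_zero.mp h) hs

lemma exists_smul_residueField_eq (hp : Maximal (fun I : Ideal R => Disjoint (I : Set R) R⁰) p)
    (u : p.ResidueField) : ∃ s ∈ R⁰, ∃ a : R, s • u = a • 1 := by
  obtain ⟨a', t', ht', rfl⟩ := IsFractionRing.div_surjective (A := R ⧸ p) u
  obtain ⟨a, rfl⟩ := Ideal.Quotient.mk_surjective a'
  obtain ⟨t, rfl⟩ := Ideal.Quotient.mk_surjective t'
  have ht : t ∉ p := fun h => nonZeroDivisors.ne_zero ht' (Ideal.Quotient.eq_zero_iff_mem.mpr h)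
  obtain ⟨s, hs, c, hsct⟩ := exists_mem_nonZeroDivisors_sub_mul_mem hp ht
  have hft : algebraMap R p.ResidueField t ≠ 0 := mt Ideal.algebraMap_residueField_eq_zero.mp ht
  have hs' : algebraMap R p.ResidueField s = algebraMap R _ c * algebraMap R _ t := by
    rw [← map_mul, ← sub_eq_zero, ← map_sub, Ideal.algebraMap_residueField_eq_zero]
    exact hsct
  refine ⟨s, hs, c * a, ?_⟩
  simp only [Algebra.smul_def, Ideal.algebraMap_quotient_residueField_mk, hs', map_mul, mul_one]
  field_simp

lemma isTorsionFreeMod_residueField (hp : Disjoint (p : Set R) R⁰) :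
    IsTorsionFreeMod R p.ResidueField := fun r x hr hx => by
  rw [Algebra.smul_def] at hx
  exact (mul_eq_zero.mp hx).resolve_left (algebraMap_residueField_ne_zero hp hr)

lemma isDivisibleMod_residueField (hp : Disjoint (p : Set R) R⁰) :
    IsDivisibleMod R p.ResidueField := fun r hr x =>
  ⟨(algebraMap R _ r)⁻¹ * x, by
    rw [Algebra.smul_def, ← mul_assoc, mul_inv_cancel₀ (algebraMap_residueField_ne_zero hp hr),
      one_mul]⟩

lemma simpleDivisible_residueField (hp : Maximal (fun I : Ideal R => Disjoint (I : Set R) R⁰) p) :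
    SimpleDivisible R p.ResidueField := by
  refine simpleDivisible_of_exists_smul_eq_smul (isTorsionFreeMod_residueField hp.prop)
    (isDivisibleMod_residueField hp.prop) ⟨1, one_ne_zero⟩ fun u v hv => ?_
  obtain ⟨s, hs, a, h⟩ := exists_smul_residueField_eq hp (u * v⁻¹)
  refine ⟨s, hs, a, ?_⟩
  calc s • u = s • (u * v⁻¹) * v := by rw [smul_mul_assoc, inv_mul_cancel_right₀ hv]
    _ = a • v := by rw [h, smul_mul_assoc, one_mul]

lemma isLocalizedModule_residueField
    (hp : Maximal (fun I : Ideal R => Disjoint (I : Set R) R⁰) p) :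
    IsLocalizedModule R⁰ (p.liftQ (toSpanSingleton R p.ResidueField 1)
      ker_toSpanSingleton_residueField_one.ge) :=
  isLocalizedModule_liftQ_toSpanSingleton (isTorsionFreeMod_residueField hp.prop)
    (isDivisibleMod_residueField hp.prop) ker_toSpanSingleton_residueField_one
    (exists_smul_residueField_eq hp)

end ResidueField

section AssociatedPrimes

variable {R : Type} [CommRing R] [IsNoetherianRing R]

lemma IsAssociatedPrime.disjoint_nonZeroDivisors {q : Ideal R} (hq : IsAssociatedPrime q R) :
    Disjoint (q : Set R) R⁰ :=
  Set.subset_compl_iff_disjoint_right.mp <| biUnion_associatedPrimes_eq_compl_nonZeroDivisors R ▸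
    Set.subset_biUnion_of_mem (u := fun q : Ideal R => (q : Set R)) hq

lemma exists_isAssociatedPrime_le_of_disjoint {I : Ideal R} (hI : Disjoint (I : Set R) R⁰) :
    ∃ q : Ideal R, IsAssociatedPrime q R ∧ I ≤ q :=
  (I.subset_union_prime_finite (associatedPrimes.finite R R) (f := id) 0 0
    fun _ h _ _ => h.isPrime).mp <|
      biUnion_associatedPrimes_eq_compl_nonZeroDivisors R ▸ hI.subset_compl_right

lemma maximal_isAssociatedPrime_iff {p : Ideal R} :
    Maximal (IsAssociatedPrime · R) p ↔
      Maximal (fun I : Ideal R => Disjoint (I : Set R) R⁰) p := by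
  constructor
  · refine fun hp => ⟨hp.prop.disjoint_nonZeroDivisors, fun I hI hpI => ?_⟩
    obtain ⟨q, hq, hIq⟩ := exists_isAssociatedPrime_le_of_disjoint hI
    exact hIq.trans (hp.le_of_ge hq (hpI.trans hIq))
  · intro hp
    obtain ⟨q, hq, hpq⟩ := exists_isAssociatedPrime_le_of_disjoint hp.prop
    obtain rfl := hp.eq_of_ge hq.disjoint_nonZeroDivisors hpq
    exact ⟨hq, fun q' hq' hpq' => hp.le_of_ge hq'.disjoint_nonZeroDivisors hpq'⟩

end AssociatedPrimes

section Classification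

variable {R M : Type} [CommRing R] [AddCommGroup M] [Module R M]

lemma maximal_ker_toSpanSingleton (hTF : IsTorsionFreeMod R M) (hSD : SimpleDivisible R M)
    {y : M} (hy : y ≠ 0) :
    Maximal (fun I : Ideal R => Disjoint (I : Set R) R⁰)
      (LinearMap.ker (toSpanSingleton R M y)) := by
  refine ⟨Set.disjoint_left.mpr fun a ha hs => hy (hTF a y hs ha), fun q hq hle => ?_⟩
  by_contra hnle
  obtain ⟨b, hbq, hb⟩ := SetLike.not_le_iff_exists.mp hnle
  obtain ⟨s, hs, a, haq, has⟩ := exists_smul_mem_of_simpleDivisible hSD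
    (U := Submodule.map (toSpanSingleton R M y) q)
    ((Submodule.ne_bot_iff _).mpr ⟨b • y, Submodule.mem_map_of_mem hbq, hb⟩) y
  rw [LinearMap.toSpanSingleton_apply] at has
  have hsa : s - a ∈ q := hle (by simp [sub_smul, has])
  exact Set.disjoint_left.mp hq (by simpa using q.add_mem hsa haq) hs

lemma exists_linearEquiv_residueField (hTF : IsTorsionFreeMod R M) (hSD : SimpleDivisible R M) :
    ∃ (p : Ideal R) (_ : p.IsPrime), Maximal (fun I : Ideal R => Disjoint (I : Set R) R⁰) p ∧
      Nonempty (M ≃ₗ[R] p.ResidueField) := by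
  obtain ⟨y, hy⟩ := hSD.1
  set p : Ideal R := LinearMap.ker (toSpanSingleton R M y)
  have hp := maximal_ker_toSpanSingleton hTF hSD hy
  have hprime : p.IsPrime :=
    Ideal.isPrime_of_maximally_disjoint p R⁰ hp.prop fun _ hJ => hp.not_prop_of_gt hJ
  have hfrac : ∀ x : M, ∃ s ∈ R⁰, ∃ a : R, s • x = a • y := fun x => by
    obtain ⟨s, hs, hx⟩ := exists_smul_mem_of_simpleDivisible hSD (U := R ∙ y) (by simpa) x
    obtain ⟨a, ha⟩ := Submodule.mem_span_singleton.mp hx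
    exact ⟨s, hs, a, ha.symm⟩
  have := isLocalizedModule_liftQ_toSpanSingleton hTF hSD.2.1 rfl hfrac
  have := isLocalizedModule_residueField hp
  exact ⟨p, hprime, hp, ⟨IsLocalizedModule.linearEquiv R⁰
    (p.liftQ (toSpanSingleton R M y) le_rfl) (p.liftQ _ ker_toSpanSingleton_residueField_one.ge)⟩⟩

end Classification

theorem stmt13_general (R : Type) [CommRing R] [IsNoetherianRing R]
    (M : Type) [AddCommGroup M] [Module R M] :
    ((SimpleTorsionFree R M ∧ IsDivisibleMod R M) ↔
      (IsTorsionFreeMod R M ∧ SimpleDivisible R M)) ∧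
    ((SimpleTorsionFree R M ∧ IsDivisibleMod R M) ↔
      ∃ (p : Ideal R) (_ : p.IsPrime),
        IsAssociatedPrime p R ∧
        (∀ q : Ideal R, IsAssociatedPrime q R → p ≤ q → q = p) ∧
        Nonempty (M ≃ₗ[R] IsLocalRing.ResidueField (Localization.AtPrime p))) := by
  refine ⟨simpleTorsionFree_and_isDivisibleMod_iff,
    simpleTorsionFree_and_isDivisibleMod_iff.trans ⟨fun ⟨hTF, hSD⟩ => ?_, ?_⟩⟩
  · obtain ⟨p, hp, hmax, e⟩ := exists_linearEquiv_residueField hTF hSD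
    have hass := maximal_isAssociatedPrime_iff.mpr hmax
    exact ⟨p, hp, hass.prop, fun q hq hpq => hass.eq_of_ge hq hpq, e⟩
  · rintro ⟨p, hprime, hass, hmax, ⟨e⟩⟩
    have hp := maximal_isAssociatedPrime_iff.mp <|
      maximal_iff.mpr ⟨hass, fun q hq hpq => (hmax q hq hpq).symm⟩
    exact ⟨(isTorsionFreeMod_residueField hp.prop).of_injective e.injective,
      (simpleDivisible_residueField hp).of_linearEquiv e⟩

/-- Over a Noetherian local ring `R`, for a module `M` TFAE:
(i) `M` is simple torsion-free and divisible;
(ii) `M` is torsion-free and simple divisible;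
(iii) `M ≅ κ(p)` for some maximal element `p` of `Ass(R)`. -/
theorem stmt13 (R : Type) [CommRing R] [IsNoetherianRing R] [IsLocalRing R]
    (M : Type) [AddCommGroup M] [Module R M] :
    ((SimpleTorsionFree R M ∧ IsDivisibleMod R M) ↔
      (IsTorsionFreeMod R M ∧ SimpleDivisible R M)) ∧
    ((SimpleTorsionFree R M ∧ IsDivisibleMod R M) ↔
      ∃ (p : Ideal R) (_ : p.IsPrime),
        IsAssociatedPrime p R ∧
        (∀ q : Ideal R, IsAssociatedPrime q R → p ≤ q → q = p) ∧
        Nonempty (M ≃ₗ[R] IsLocalRing.ResidueField (Localization.AtPrime p))) :=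
  stmt13_general R M
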